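/- Let α ∈ (1, 2). There exists θ₀ ∈ (π/2, π) such that for every θ ∈ (π/2, θ₀) there is a constant c > 0, independent of τ and z, with the property: for every time step τ > 0 and every z ∈ D(τ,θ) one has δ_τ(e^{−zτ}) ≠ 0 and |δ_τ(e^{−zτ})^α − z^α| ≤ c τ³ |z|^{3+α}, where δ_τ is the BDF3 generating symbol and powers are principal complex powers. -/

import Mathlib

open Complex Set

/-- The BDF3 generating symbol `δ_τ(ξ) = τ⁻¹(11/6 − 3ξ + (3/2)ξ² − (1/3)ξ³)`. -/
noncomputable def bdf3 (τ : ℝ) (ξ : ℂ) : ℂ :=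
  (τ : ℂ)⁻¹ * (11 / 6 - 3 * ξ + (3 / 2) * ξ ^ 2 - (1 / 3) * ξ ^ 3)

/-- The region `D(τ,θ)`: nonzero `z` with either `|arg z| = θ` and `|Im z| ≤ π/τ`,
or `|z| ≤ 1/τ` and `|arg z| ≤ θ`. -/
def Dset (τ θ : ℝ) : Set ℂ :=
  {z : ℂ | z ≠ 0 ∧
    ((|z.arg| = θ ∧ |z.im| ≤ Real.pi / τ) ∨ (‖z‖ ≤ 1 / τ ∧ |z.arg| ≤ θ))}

open scoped Real

/-!
Put `w = τ z`. Since `δ_τ(ξ) = τ⁻¹ δ_1(ξ)` and `(t x)^α = t^α x^α` for `t > 0`, the estimate is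
homogeneous under this scaling, so it suffices to show
`|δ_1(e^{-w})^α - w^α| ≤ C |w|^{3+α}` on the truncated sector `|arg w| ≤ π/2 + 1/10`, `|w| ≤ 4`,
which contains every `τ z` with `z ∈ D(τ,θ)`.

For `|w| ≤ 1/3`, Taylor expansion gives `δ_1(e^{-w}) = w + O(|w|^4)` (BDF3 has order 3); the
segment from `w` to `δ_1(e^{-w})` then stays away from the branch cut, and the mean value theorem
for `ζ ↦ ζ^α` on it gives the bound. For `1/3 ≤ |w| ≤ 4` both powers are simply bounded.
Nonvanishing: `δ_1(ξ) = -(ξ - 1)(ξ² - 7ξ/2 + 11/2)/3`, where `e^{-w} ≠ 1` because `0 < |w| < 2π`,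
and the roots of the quadratic factor have modulus `√(11/2) > e^{1/2} ≥ |e^{-w}|`.
-/

lemma Complex.ofReal_mul_cpow {r : ℝ} (hr : 0 ≤ r) (x s : ℂ) :
    ((r : ℂ) * x) ^ s = (r : ℂ) ^ s * x ^ s := by
  rcases eq_or_ne s 0 with rfl | hs
  · simp
  rcases hr.eq_or_lt with rfl | hr
  · simp [zero_cpow hs]
  rcases eq_or_ne x 0 with rfl | hx
  · simp [zero_cpow hs]
  have hr' : (r : ℂ) ≠ 0 := ofReal_ne_zero.2 hr.ne'
  rw [cpow_def_of_ne_zero (mul_ne_zero hr' hx), log_ofReal_mul hr hx, add_mul, exp_add,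
    ← cpow_def_of_ne_zero hx, cpow_def_of_ne_zero hr', ofReal_log hr.le]

lemma Complex.norm_ofReal_mul_cpow_sub_ofReal_mul_cpow {r : ℝ} (hr : 0 ≤ r) (x y : ℂ) (s : ℝ) :
    ‖((r : ℂ) * x) ^ (s : ℂ) - ((r : ℂ) * y) ^ (s : ℂ)‖ = r ^ s * ‖x ^ (s : ℂ) - y ^ (s : ℂ)‖ := by
  rw [ofReal_mul_cpow hr, ofReal_mul_cpow hr, ← mul_sub, norm_mul, norm_cpow_real, norm_real,
    Real.norm_of_nonneg hr]

lemma Complex.abs_im_eq_norm_mul_sin_abs_arg (z : ℂ) : |z.im| = ‖z‖ * Real.sin |z.arg| := by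
  rw [← norm_mul_sin_arg, abs_mul, abs_norm,
    Real.abs_sin_eq_sin_abs_of_abs_le_pi (abs_arg_le_pi z)]

lemma Complex.neg_mul_norm_le_re_of_abs_arg_le {δ : ℝ} (hδ : 0 ≤ δ) {z : ℂ}
    (h : |z.arg| ≤ π / 2 + δ) : -(δ * ‖z‖) ≤ z.re := by
  have hsin : Real.sin (|z.arg| - π / 2) ≤ δ := by
    rcases le_total (|z.arg| - π / 2) 0 with hneg | hpos
    · exact (Real.sin_nonpos_of_nonpos_of_neg_pi_le hneg (by linarith [abs_nonneg z.arg,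
        Real.pi_pos])).trans hδ
    · exact (Real.sin_le hpos).trans (by linarith)
  rw [← norm_mul_cos_arg, ← Real.cos_abs, ← neg_neg (Real.cos _), ← Real.sin_sub_pi_div_two]
  nlinarith [mul_le_mul_of_nonneg_left hsin (norm_nonneg z)]

lemma Complex.normSq_eq_of_sq_add_mul_add_eq_zero {b c : ℝ} (hbc : b ^ 2 < 4 * c) {u : ℂ}
    (hu : u ^ 2 + b * u + c = 0) : normSq u = c := by
  have hre := congrArg re hu
  have him := congrArg im hu
  simp only [sq, add_re, mul_re, ofReal_re, ofReal_im, add_im, mul_im, zero_re, zero_im] at hre him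
  rw [normSq_apply]
  rcases mul_eq_zero.1 (show u.im * (2 * u.re + b) = 0 by linarith) with h | h
  · nlinarith [sq_nonneg (2 * u.re + b)]
  · linear_combination -hre + u.re * h

lemma Complex.exp_ne_one_of_norm_lt {w : ℂ} (hw0 : w ≠ 0) (hw : ‖w‖ < 2 * π) : exp w ≠ 1 := by
  intro h
  obtain ⟨n, rfl⟩ := exp_eq_one_iff.1 h
  have hn : n ≠ 0 := by rintro rfl; simp at hw0
  have : 1 ≤ |(n : ℝ)| := by exact_mod_cast Int.one_le_abs hn
  rw [norm_mul, norm_intCast, norm_mul, norm_I, mul_one, norm_mul, norm_real,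
    Real.norm_of_nonneg Real.pi_pos.le, Complex.norm_two] at hw
  nlinarith [Real.pi_pos]

lemma Complex.norm_exp_sub_taylor_three_le {x : ℂ} (hx : ‖x‖ ≤ 1) :
    ‖exp x - (1 + x + x ^ 2 / 2 + x ^ 3 / 6)‖ ≤ 5 / 96 * ‖x‖ ^ 4 := by
  have h := exp_bound hx (n := 4) (by norm_num)
  simp only [Finset.sum_range_succ, Finset.sum_range_zero, Nat.factorial] at h
  norm_num at h
  linarith

lemma Complex.mem_slitPlane_of_norm_sub_lt {p w : ℂ} (h : ‖p - w‖ < max w.re |w.im|) :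
    p ∈ slitPlane := by
  rw [mem_slitPlane_iff]
  by_contra! hp
  have hre := abs_re_le_norm (p - w)
  have him := abs_im_le_norm (p - w)
  rw [sub_re, abs_le] at hre
  rw [sub_im, hp.2, zero_sub, abs_neg] at him
  rcases lt_max_iff.1 h with h | h <;> linarith [hp.1]

lemma Complex.norm_div_two_le_max_re_abs_im {w : ℂ} (hre : -(‖w‖ / 2) ≤ w.re) :
    ‖w‖ / 2 ≤ max w.re |w.im| := by
  by_contra! h
  rw [max_lt_iff] at h
  have hnorm : ‖w‖ ^ 2 = w.re ^ 2 + |w.im| ^ 2 := by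
    rw [sq_abs, Complex.sq_norm, normSq_apply]; ring
  nlinarith [abs_nonneg w.im, norm_nonneg w]

lemma Complex.norm_cpow_sub_cpow_le {α : ℝ} (hα : 1 ≤ α) {a w : ℂ}
    (h : ‖a - w‖ < max w.re |w.im|) :
    ‖a ^ (α : ℂ) - w ^ (α : ℂ)‖ ≤ α * (‖w‖ + ‖a - w‖) ^ (α - 1) * ‖a - w‖ := by
  have hseg : ∀ p ∈ segment ℝ w a, ‖p - w‖ ≤ ‖a - w‖ := fun p hp => by
    simpa [dist_eq] using
      (convex_closedBall w ‖a - w‖).segment_subset (by simp) (by simp [dist_eq]) hp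
  refine (convex_segment w a).norm_image_sub_le_of_norm_hasDerivWithin_le
    (f := fun p => p ^ (α : ℂ)) (f' := fun p => (α : ℂ) * p ^ ((α : ℂ) - 1))
    (fun p hp => ?_) (fun p hp => ?_) (left_mem_segment ℝ w a) (right_mem_segment ℝ w a)
  · exact (hasStrictDerivAt_cpow_const
      (mem_slitPlane_of_norm_sub_lt ((hseg p hp).trans_lt h))).hasDerivAt.hasDerivWithinAt
  · have hp : ‖p‖ ≤ ‖w‖ + ‖a - w‖ := by
      linarith [norm_le_insert' p w, hseg p hp]
    rw [norm_mul, norm_real, Real.norm_of_nonneg (by linarith), ← ofReal_one, ← ofReal_sub,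
      norm_cpow_real]
    gcongr

lemma bdf3_eq_inv_mul (τ : ℝ) (ξ : ℂ) : bdf3 τ ξ = (τ : ℂ)⁻¹ * bdf3 1 ξ := by
  simp [bdf3]

lemma bdf3_one_eq_mul (ξ : ℂ) :
    bdf3 1 ξ = -(1 / 3) * (ξ - 1) * (ξ ^ 2 - 7 / 2 * ξ + 11 / 2) := by
  simp only [bdf3, ofReal_one, inv_one, one_mul]
  ring

lemma bdf3_one_exp_neg_ne_zero {w : ℂ} (hw0 : w ≠ 0) (hre : -(1 / 2) < w.re)
    (hw : ‖w‖ < 2 * π) : bdf3 1 (exp (-w)) ≠ 0 := by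
  have hexp : exp (-w) ≠ 1 := exp_ne_one_of_norm_lt (neg_ne_zero.2 hw0) (by rwa [norm_neg])
  have hnormSq : normSq (exp (-w)) < 11 / 2 := by
    have : Real.exp (-w.re) ^ 2 < Real.exp 1 := by
      rw [sq, ← Real.exp_add]
      exact Real.exp_lt_exp.2 (by linarith)
    rw [normSq_eq_norm_sq, norm_exp, neg_re]
    linarith [Real.exp_one_lt_three]
  rw [bdf3_one_eq_mul]
  refine mul_ne_zero (mul_ne_zero (by norm_num) (sub_ne_zero.2 hexp)) fun h => hnormSq.ne ?_
  exact normSq_eq_of_sq_add_mul_add_eq_zero (b := -7 / 2) (by norm_num)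
    (by push_cast; linear_combination h)

lemma norm_bdf3_one_exp_neg_sub_le {w : ℂ} (hw : ‖w‖ ≤ 1 / 3) :
    ‖bdf3 1 (exp (-w)) - w‖ ≤ 3 * ‖w‖ ^ 4 := by
  set E : ℂ → ℂ := fun x => exp x - (1 + x + x ^ 2 / 2 + x ^ 3 / 6) with hE
  have hEk : ∀ k : ℂ, ‖k‖ ≤ 3 → ‖E (-(k * w))‖ ≤ 5 / 96 * ‖k‖ ^ 4 * ‖w‖ ^ 4 := fun k hk => by
    have hkw : ‖-(k * w)‖ = ‖k‖ * ‖w‖ := by rw [norm_neg, norm_mul]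
    rw [mul_assoc, ← mul_pow, ← hkw]
    exact norm_exp_sub_taylor_three_le (by rw [hkw]; nlinarith [norm_nonneg w, norm_nonneg k])
  -- BDF3 is exact on cubic polynomials, so only the Taylor remainders of `exp` survive.
  have hsplit : bdf3 1 (exp (-w)) - w =
      -3 * E (-(1 * w)) + 3 / 2 * E (-(2 * w)) - 1 / 3 * E (-(3 * w)) := by
    simp only [hE, bdf3, ofReal_one, inv_one, one_mul, ← exp_nat_mul]
    push_cast
    ring_nf
  calc ‖bdf3 1 (exp (-w)) - w‖
      ≤ ‖(-3 : ℂ)‖ * ‖E (-(1 * w))‖ + ‖(3 / 2 : ℂ)‖ * ‖E (-(2 * w))‖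
          + ‖(1 / 3 : ℂ)‖ * ‖E (-(3 * w))‖ := by
        rw [hsplit, ← norm_mul, ← norm_mul, ← norm_mul]
        exact norm_sub_le_of_le (norm_add_le _ _) le_rfl
    _ ≤ ‖(-3 : ℂ)‖ * (5 / 96 * ‖(1 : ℂ)‖ ^ 4 * ‖w‖ ^ 4)
          + ‖(3 / 2 : ℂ)‖ * (5 / 96 * ‖(2 : ℂ)‖ ^ 4 * ‖w‖ ^ 4)
          + ‖(1 / 3 : ℂ)‖ * (5 / 96 * ‖(3 : ℂ)‖ ^ 4 * ‖w‖ ^ 4) := by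
        gcongr <;> exact hEk _ (by norm_num)
    _ = 45 / 16 * ‖w‖ ^ 4 := by norm_num; ring
    _ ≤ 3 * ‖w‖ ^ 4 := by nlinarith [pow_nonneg (norm_nonneg w) 4]

lemma norm_bdf3_one_exp_neg_cpow_sub_cpow_le_of_norm_le {α : ℝ} (hα : 1 ≤ α) {w : ℂ}
    (hw0 : w ≠ 0) (hre : -(‖w‖ / 2) ≤ w.re) (hw : ‖w‖ ≤ 1 / 3) :
    ‖bdf3 1 (exp (-w)) ^ (α : ℂ) - w ^ (α : ℂ)‖ ≤ 3 * α * 2 ^ (α - 1) * ‖w‖ ^ (3 + α) := by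
  set r := ‖w‖
  have hr : 0 < r := norm_pos_iff.2 hw0
  have hcons := norm_bdf3_one_exp_neg_sub_le hw
  have hsmall : 3 * r ^ 4 < r / 2 := by
    nlinarith [mul_le_mul_of_nonneg_left (pow_le_pow_left₀ hr.le hw 3) hr.le]
  calc ‖bdf3 1 (exp (-w)) ^ (α : ℂ) - w ^ (α : ℂ)‖
      ≤ α * (r + ‖bdf3 1 (exp (-w)) - w‖) ^ (α - 1) * ‖bdf3 1 (exp (-w)) - w‖ :=
        norm_cpow_sub_cpow_le hα (by linarith [norm_div_two_le_max_re_abs_im hre])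
    _ ≤ α * (2 * r) ^ (α - 1) * (3 * r ^ 4) := by gcongr; linarith
    _ = 3 * α * 2 ^ (α - 1) * r ^ (3 + α) := by
        rw [Real.mul_rpow zero_le_two hr.le, show 3 + α = α - 1 + (4 : ℕ) by push_cast; ring,
          Real.rpow_add_natCast hr.ne']
        ring

lemma norm_bdf3_one_le {ξ : ℂ} (hξ : ‖ξ‖ ≤ 3) : ‖bdf3 1 ξ‖ ≤ 34 := by
  simp only [bdf3, ofReal_one, inv_one, one_mul]
  calc ‖11 / 6 - 3 * ξ + 3 / 2 * ξ ^ 2 - 1 / 3 * ξ ^ 3‖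
      ≤ ‖(11 / 6 : ℂ)‖ + ‖3 * ξ‖ + ‖3 / 2 * ξ ^ 2‖ + ‖1 / 3 * ξ ^ 3‖ :=
        norm_sub_le_of_le (norm_add_le_of_le (norm_sub_le _ _) le_rfl) le_rfl
    _ = 11 / 6 + 3 * ‖ξ‖ + 3 / 2 * ‖ξ‖ ^ 2 + 1 / 3 * ‖ξ‖ ^ 3 := by
        simp only [norm_mul, norm_pow]; norm_num
    _ ≤ 34 := by nlinarith [norm_nonneg ξ]

lemma norm_bdf3_one_exp_neg_cpow_sub_cpow_le_of_le_norm {α : ℝ} (hα : 0 ≤ α) {w : ℂ}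
    (hre : -(1 / 2) < w.re) (hw₁ : 1 / 3 ≤ ‖w‖) (hw₄ : ‖w‖ ≤ 4) :
    ‖bdf3 1 (exp (-w)) ^ (α : ℂ) - w ^ (α : ℂ)‖ ≤
      (34 ^ α + 4 ^ α) * 3 ^ (3 + α) * ‖w‖ ^ (3 + α) := by
  have hexp : ‖exp (-w)‖ ≤ 3 := by
    rw [norm_exp, neg_re]
    exact (Real.exp_le_exp.2 (by linarith)).trans Real.exp_one_lt_three.le
  have hscale : 1 ≤ 3 ^ (3 + α) * ‖w‖ ^ (3 + α) := by
    rw [← Real.mul_rpow (by norm_num) (norm_nonneg w)]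
    exact Real.one_le_rpow (by linarith) (by linarith)
  calc ‖bdf3 1 (exp (-w)) ^ (α : ℂ) - w ^ (α : ℂ)‖
      ≤ ‖bdf3 1 (exp (-w))‖ ^ α + ‖w‖ ^ α := by
        rw [← norm_cpow_real, ← norm_cpow_real]; exact norm_sub_le _ _
    _ ≤ 34 ^ α + 4 ^ α := by gcongr; exact norm_bdf3_one_le hexp
    _ ≤ (34 ^ α + 4 ^ α) * (3 ^ (3 + α) * ‖w‖ ^ (3 + α)) :=
        le_mul_of_one_le_right (by positivity) hscale
    _ = (34 ^ α + 4 ^ α) * 3 ^ (3 + α) * ‖w‖ ^ (3 + α) := by ring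

lemma exists_bdf3_one_exp_neg_cpow_sub_cpow_le {α : ℝ} (hα : 1 ≤ α) :
    ∃ C > 0, ∀ w : ℂ, w ≠ 0 → -(‖w‖ / 10) ≤ w.re → ‖w‖ ≤ 4 →
      bdf3 1 (exp (-w)) ≠ 0 ∧
        ‖bdf3 1 (exp (-w)) ^ (α : ℂ) - w ^ (α : ℂ)‖ ≤ C * ‖w‖ ^ (3 + α) := by
  set C₁ := 3 * α * 2 ^ (α - 1)
  set C₂ := ((34 : ℝ) ^ α + 4 ^ α) * 3 ^ (3 + α)
  have hC₁ : 0 < C₁ := by positivity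
  have hC₂ : 0 < C₂ := by positivity
  refine ⟨C₁ + C₂, by positivity, fun w hw0 hre hw => ⟨?_, ?_⟩⟩
  · exact bdf3_one_exp_neg_ne_zero hw0 (by linarith) (by linarith [Real.pi_gt_three])
  rcases le_total ‖w‖ (1 / 3) with hsmall | hlarge
  · calc _ ≤ C₁ * ‖w‖ ^ (3 + α) := norm_bdf3_one_exp_neg_cpow_sub_cpow_le_of_norm_le hα hw0
          (by linarith [norm_nonneg w]) hsmall
      _ ≤ (C₁ + C₂) * ‖w‖ ^ (3 + α) := by gcongr; linarith
  · calc _ ≤ C₂ * ‖w‖ ^ (3 + α) := norm_bdf3_one_exp_neg_cpow_sub_cpow_le_of_le_norm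
          (by linarith : (0 : ℝ) ≤ α) (by linarith) hlarge hw
      _ ≤ (C₁ + C₂) * ‖w‖ ^ (3 + α) := by gcongr; linarith

lemma abs_arg_le_of_mem_Dset {τ θ : ℝ} {z : ℂ} (hz : z ∈ Dset τ θ) : |z.arg| ≤ θ := by
  rcases hz.2 with ⟨h, -⟩ | ⟨-, h⟩
  exacts [h.le, h]

lemma mul_norm_le_of_mem_Dset {τ θ : ℝ} (hτ : 0 < τ) (hθ : 4 / 5 ≤ Real.sin θ) {z : ℂ}
    (hz : z ∈ Dset τ θ) : τ * ‖z‖ ≤ 4 := by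
  rcases hz.2 with ⟨harg, him⟩ | ⟨hnorm, -⟩
  · rw [abs_im_eq_norm_mul_sin_abs_arg, harg, le_div_iff₀ hτ] at him
    nlinarith [Real.pi_lt_d2, norm_nonneg z]
  · rw [le_div_iff₀ hτ] at hnorm
    linarith

lemma norm_bdf3_exp_cpow_sub_cpow_le_of_scaled {α C τ : ℝ} (hτ : 0 < τ) {z : ℂ}
    (h : ‖bdf3 1 (exp (-(τ * z))) ^ (α : ℂ) - (τ * z) ^ (α : ℂ)‖ ≤ C * ‖(τ : ℂ) * z‖ ^ (3 + α)) :
    ‖bdf3 τ (exp (-z * τ)) ^ (α : ℂ) - z ^ (α : ℂ)‖ ≤ C * τ ^ 3 * ‖z‖ ^ (3 + α) := by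
  have hz : z = ((τ⁻¹ : ℝ) : ℂ) * (τ * z) := by
    rw [← mul_assoc, ← ofReal_mul, inv_mul_cancel₀ hτ.ne', ofReal_one, one_mul]
  have hτα : τ⁻¹ ^ α * τ ^ (3 + α) = τ ^ 3 := by
    rw [show 3 + α = α + (3 : ℕ) by push_cast; ring, Real.rpow_add_natCast hτ.ne', ← mul_assoc,
      Real.inv_rpow hτ.le, inv_mul_cancel₀ (Real.rpow_pos_of_pos hτ α).ne', one_mul]
  calc ‖bdf3 τ (exp (-z * τ)) ^ (α : ℂ) - z ^ (α : ℂ)‖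
      = τ⁻¹ ^ α * ‖bdf3 1 (exp (-(τ * z))) ^ (α : ℂ) - (τ * z) ^ (α : ℂ)‖ := by
        rw [← norm_ofReal_mul_cpow_sub_ofReal_mul_cpow (inv_nonneg.2 hτ.le), ← hz,
          bdf3_eq_inv_mul, ofReal_inv, neg_mul, mul_comm z]
    _ ≤ τ⁻¹ ^ α * (C * (τ ^ (3 + α) * ‖z‖ ^ (3 + α))) := by
        rw [norm_mul, norm_real, Real.norm_of_nonneg hτ.le,
          Real.mul_rpow hτ.le (norm_nonneg z)] at h
        gcongr
    _ = C * τ ^ 3 * ‖z‖ ^ (3 + α) := by rw [← hτα]; ring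

theorem bdf3_symbol_fractional_power_consistency (α : ℝ) (hα : α ∈ Ioo (1 : ℝ) 2) :
    ∃ θ₀ ∈ Ioo (Real.pi / 2) Real.pi, ∀ θ ∈ Ioo (Real.pi / 2) θ₀,
      ∃ c > (0 : ℝ),
        ∀ τ : ℝ, 0 < τ → ∀ z ∈ Dset τ θ,
          bdf3 τ (Complex.exp (-z * τ)) ≠ 0 ∧
          ‖(bdf3 τ (Complex.exp (-z * τ))) ^ (α : ℂ) - z ^ (α : ℂ)‖ ≤
            c * τ ^ 3 * ‖z‖ ^ (3 + α) := by
  obtain ⟨C, hC, hunit⟩ := exists_bdf3_one_exp_neg_cpow_sub_cpow_le hα.1.le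
  refine ⟨π / 2 + 1 / 10, ⟨by linarith [Real.pi_pos], by linarith [Real.pi_gt_three]⟩,
    fun θ hθ => ⟨C, hC, fun τ hτ z hz => ?_⟩⟩
  have hsin : 4 / 5 ≤ Real.sin θ := by
    rw [← Real.cos_sub_pi_div_two]
    nlinarith [Real.one_sub_sq_div_two_le_cos (x := θ - π / 2), hθ.1, hθ.2]
  have hnorm : ‖(τ : ℂ) * z‖ = τ * ‖z‖ := by
    rw [norm_mul, norm_real, Real.norm_of_nonneg hτ.le]
  have hre : -(‖(τ : ℂ) * z‖ / 10) ≤ ((τ : ℂ) * z).re := by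
    have := neg_mul_norm_le_re_of_abs_arg_le (by norm_num)
      ((abs_arg_le_of_mem_Dset hz).trans hθ.2.le)
    rw [hnorm, re_ofReal_mul]
    nlinarith
  obtain ⟨hne, hle⟩ := hunit _ (mul_ne_zero (ofReal_ne_zero.2 hτ.ne') hz.1) hre
    (hnorm ▸ mul_norm_le_of_mem_Dset hτ hsin hz)
  refine ⟨?_, norm_bdf3_exp_cpow_sub_cpow_le_of_scaled hτ hle⟩
  rw [bdf3_eq_inv_mul, neg_mul, mul_comm z]
  exact mul_ne_zero (inv_ne_zero (ofReal_ne_zero.2 hτ.ne')) hne
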